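/- (The paper's Lemma on null vectors.) Let V be a finite-dimensional real vector space, Q a nondegenerate quadratic form on V, and M a finite-dimensional Cℓ(Q)-module. Let v ∈ V be a nonzero null vector, i.e. v ≠ 0 and Q(v) = 0, and set L_v := ker γ_v ⊆ M. Then: (a) ker γ_v = range γ_v; (b) 2·dim L_v = dim M; and (c) if h is a bilinear form on M of type τ ∈ {+1, −1}, then L_v is h-isotropic, i.e. h(s,t) = 0 for all s, t ∈ L_v. -/

import Mathlib

/-- The Clifford multiplication `γ_v : s ↦ ι(v) • s` as an `ℝ`-linear endomorphism
of a `Cℓ(Q)`-module `M`. -/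
noncomputable def gammaLin {V : Type*} [AddCommGroup V] [Module ℝ V]
    (Q : QuadraticForm ℝ V) {M : Type*} [AddCommGroup M] [Module ℝ M]
    [Module (CliffordAlgebra Q) M] [IsScalarTower ℝ (CliffordAlgebra Q) M]
    (v : V) : M →ₗ[ℝ] M where
  toFun s := CliffordAlgebra.ι Q v • s
  map_add' s t := smul_add _ s t
  map_smul' r s := (smul_comm r (CliffordAlgebra.ι Q v) s).symm

/-!
Pick `w` with `polar Q v w = 1`, possible since `polar Q` is nondegenerate and `v ≠ 0`.
The Clifford relations give `γ_v² = Q v = 0` and `γ_v γ_w + γ_w γ_v = 1`, so `γ_w` is a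
contracting homotopy for the complex `γ_v`: every `s ∈ ker γ_v` equals `γ_v (γ_w s)`.
Hence `ker γ_v = range γ_v`, rank–nullity halves the dimension, and for `s = γ_v u` and
`t ∈ ker γ_v` the type condition gives `h s t = τ * h u (γ_v t) = 0`.
-/

namespace LinearMap

variable {R M : Type*} [CommRing R] [AddCommGroup M] [Module R M]

theorem ker_eq_range_of_comp_self_eq_zero_of_homotopy {f g : M →ₗ[R] M} (hff : f ∘ₗ f = 0)
    (hfg : f ∘ₗ g + g ∘ₗ f = id) : ker f = range f := by
  refine le_antisymm (fun s hs => ⟨g s, ?_⟩) (range_le_ker_iff.mpr hff)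
  simpa [mem_ker.mp hs] using congr($hfg s)

theorem two_mul_finrank_ker_of_ker_eq_range {K : Type*} [DivisionRing K] [Module K M]
    [FiniteDimensional K M] {f : M →ₗ[K] M} (hf : ker f = range f) :
    2 * Module.finrank K (ker f) = Module.finrank K M := by
  have := finrank_range_add_finrank_ker f
  rw [← hf] at this
  omega

theorem BilinForm.apply_eq_zero_of_mem_range_of_mem_ker {B : LinearMap.BilinForm R M} {f : M →ₗ[R] M}
    {τ : R} (hB : ∀ s t, B (f s) t = τ * B s (f t)) {s t : M} (hs : s ∈ range f)
    (ht : t ∈ ker f) : B s t = 0 := by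
  obtain ⟨u, rfl⟩ := hs
  rw [hB, mem_ker.mp ht, map_zero, mul_zero]

theorem SeparatingLeft.exists_apply_eq_one {K N : Type*} [Field K] [AddCommGroup N]
    [Module K N] [Module K M] {B : M →ₗ[K] N →ₗ[K] K} (hB : B.SeparatingLeft) {v : M}
    (hv : v ≠ 0) : ∃ w, B v w = 1 := by
  obtain ⟨w, hw⟩ : ∃ w, B v w ≠ 0 := by
    by_contra! h
    exact hv (hB v h)
  exact ⟨(B v w)⁻¹ • w, by rw [map_smul, smul_eq_mul, inv_mul_cancel₀ hw]⟩

end LinearMap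

section gammaLin

variable {V : Type*} [AddCommGroup V] [Module ℝ V] (Q : QuadraticForm ℝ V)
  {M : Type*} [AddCommGroup M] [Module ℝ M] [Module (CliffordAlgebra Q) M]
  [IsScalarTower ℝ (CliffordAlgebra Q) M]

@[simp]
theorem gammaLin_apply (v : V) (s : M) : gammaLin Q v s = CliffordAlgebra.ι Q v • s := rfl

theorem gammaLin_comp_self (v : V) : gammaLin Q (M := M) v ∘ₗ gammaLin Q v = Q v • LinearMap.id := by
  ext s
  simp [← mul_smul, CliffordAlgebra.ι_sq_scalar, algebraMap_smul]

theorem gammaLin_comp_add_comp_swap (v w : V) :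
    gammaLin Q (M := M) v ∘ₗ gammaLin Q w + gammaLin Q w ∘ₗ gammaLin Q v =
      QuadraticMap.polar Q v w • LinearMap.id := by
  ext s
  simp [← mul_smul, ← add_smul, CliffordAlgebra.ι_mul_ι_add_swap, algebraMap_smul]

end gammaLin

theorem null_vector_lemma_general
    {V : Type*} [AddCommGroup V] [Module ℝ V]
    (Q : QuadraticForm ℝ V) (hQ : (QuadraticMap.polarBilin Q).Nondegenerate)
    {M : Type*} [AddCommGroup M] [Module ℝ M] [FiniteDimensional ℝ M]
    [Module (CliffordAlgebra Q) M] [IsScalarTower ℝ (CliffordAlgebra Q) M]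
    (v : V) (hv : v ≠ 0) (hnull : Q v = 0)
    (h : LinearMap.BilinForm ℝ M) (τ : ℝ)
    (htype : ∀ (x : V) (s t : M), h (gammaLin Q x s) t = τ * h s (gammaLin Q x t)) :
    LinearMap.ker (gammaLin Q (M := M) v) = LinearMap.range (gammaLin Q (M := M) v) ∧
    2 * Module.finrank ℝ (LinearMap.ker (gammaLin Q (M := M) v)) = Module.finrank ℝ M ∧
    (∀ s ∈ LinearMap.ker (gammaLin Q (M := M) v), ∀ t ∈ LinearMap.ker (gammaLin Q (M := M) v),
      h s t = 0) := by
  obtain ⟨w, hw⟩ := hQ.1.exists_apply_eq_one hv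
  have hker : LinearMap.ker (gammaLin Q (M := M) v) = LinearMap.range (gammaLin Q v) :=
    LinearMap.ker_eq_range_of_comp_self_eq_zero_of_homotopy (g := gammaLin Q w)
      (by rw [gammaLin_comp_self, hnull, zero_smul])
      (by rw [gammaLin_comp_add_comp_swap, ← QuadraticMap.polarBilin_apply_apply, hw, one_smul])
  refine ⟨hker, LinearMap.two_mul_finrank_ker_of_ker_eq_range hker, fun s hs t ht => ?_⟩
  exact LinearMap.BilinForm.apply_eq_zero_of_mem_range_of_mem_ker (htype v) (hker ▸ hs) ht

/-- Lemma on null vectors: for a nonzero null vector `v` of a nondegenerate quadratic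
form `Q` and a finite-dimensional Clifford module `M`, the subspace `L_v = ker γ_v`
equals `range γ_v`, has half the dimension of `M`, and is isotropic for any bilinear
form `h` on `M` of type `τ ∈ {+1, −1}`. -/
theorem null_vector_lemma
    {V : Type*} [AddCommGroup V] [Module ℝ V] [FiniteDimensional ℝ V]
    (Q : QuadraticForm ℝ V) (hQ : (QuadraticMap.polarBilin Q).Nondegenerate)
    {M : Type*} [AddCommGroup M] [Module ℝ M] [FiniteDimensional ℝ M]
    [Module (CliffordAlgebra Q) M] [IsScalarTower ℝ (CliffordAlgebra Q) M]
    (v : V) (hv : v ≠ 0) (hnull : Q v = 0)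
    (h : LinearMap.BilinForm ℝ M) (τ : ℝ) (hτ : τ = 1 ∨ τ = -1)
    (htype : ∀ (x : V) (s t : M), h (gammaLin Q x s) t = τ * h s (gammaLin Q x t)) :
    LinearMap.ker (gammaLin Q (M := M) v) = LinearMap.range (gammaLin Q (M := M) v) ∧
    2 * Module.finrank ℝ (LinearMap.ker (gammaLin Q (M := M) v)) = Module.finrank ℝ M ∧
    (∀ s ∈ LinearMap.ker (gammaLin Q (M := M) v), ∀ t ∈ LinearMap.ker (gammaLin Q (M := M) v),
      h s t = 0) :=
  null_vector_lemma_general Q hQ v hv hnull h τ htype
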